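/- Let λ ∈ ℤ^{r+1} be dominant (λ_1 ≥ … ≥ λ_{r+1}) and effective (λ_{r+1} ≥ 0), let ρ = (r, r−1, …, 1, 0), ρ_{r−1} = (r−1, …, 1, 0), let 0 ≤ k ≤ r−1, write y = (x_1,…,x_r), and let w_0 be the longest element of S_{r+1} and w_0^{(r−1)} the longest element of the subgroup S_r of permutations fixing r+1. Then x^{−w_0(ρ)} · Σ_T G^{(n)}(T)·x^{wt(T)} = Σ_μ G^{(n)}(T*_μ)·x_{r+1}^{d(λ+ρ)−d(μ)−r} · ( y^{−w_0^{(r−1)}(ρ_{r−1})} · Σ_{T′} G^{(n)}(T′)·y^{wt(T′)} ), where: on the left T runs over rank-r Gelfand–Tsetlin patterns with top row λ+ρ whose Γ-array satisfies Γ_{1,j} = 0 for all j > k+1; on the right μ runs over all μ ∈ ℤ^r interleaving with λ+ρ (i.e. (λ+ρ)_j ≥ μ_j ≥ (λ+ρ)_{j+1} for all j) such that μ_j = λ_{j+1}+r−j for all j > k+1; T*_μ is the rank-r pattern with top row λ+ρ and entries a_{i,j} = μ_j for all 1 ≤ i ≤ j ≤ r; T′ runs over rank-(r−1) patterns with top row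 μ; and d(·) is the sum of the coordinates. -/

import Mathlib

open scoped BigOperators Classical
open Fin.NatCast

noncomputable section

namespace MetaPaper

variable (F : Type) [Field F]

/-- The field of rational functions in `x_1, …, x_{r+1}` over `F`. -/
abbrev K (r : ℕ) : Type := FractionRing (MvPolynomial (Fin (r+1)) F)

variable (r : ℕ)

/-- The variable `x_i` as an element of `K`. -/
def XX (i : Fin (r+1)) : K F r :=
  algebraMap (MvPolynomial (Fin (r+1)) F) (K F r) (MvPolynomial.X i)

/-- A constant from `F` as an element of `K`. -/
def CC (c : F) : K F r :=
  algebraMap (MvPolynomial (Fin (r+1)) F) (K F r) (MvPolynomial.C c)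

/-- The monomial `x^λ = x_1^{λ_1} ⋯ x_{r+1}^{λ_{r+1}}`. -/
def mon (lam : Fin (r+1) → ℤ) : K F r := ∏ i, XX F r i ^ lam i

/-- The simple reflection `σ_{i+1}` (0-indexed: swapping coordinates `i` and `i+1`). -/
def sref (i : ℕ) : Equiv.Perm (Fin (r+1)) :=
  Equiv.swap ((i : Fin (r+1))) (((i+1 : ℕ) : Fin (r+1)))

/-- The product of the simple reflections indexed by a word. -/
def wordProd (l : List ℕ) : Equiv.Perm (Fin (r+1)) := (l.map (sref r)).prod

/-- The (Coxeter) length of a permutation: the least length of a word in the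
simple reflections representing it. -/
def plen (u : Equiv.Perm (Fin (r+1))) : ℕ :=
  sInf {m | ∃ l : List ℕ, (∀ i ∈ l, i < r) ∧ l.length = m ∧ wordProd r l = u}

/-- The strong Bruhat order: `u ≤ w` iff `u` is the product of a subword of a
reduced word for `w`. -/
def BruhatLE (u w : Equiv.Perm (Fin (r+1))) : Prop :=
  ∃ l : List ℕ, (∀ i ∈ l, i < r) ∧ wordProd r l = w ∧ l.length = plen r w ∧
    ∃ l' : List ℕ, l'.Sublist l ∧ wordProd r l' = u

/-- The favourite reduced word `σ_1, σ_2 σ_1, σ_3 σ_2 σ_1, …` (0-indexed) for the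
longest element of `S_{m+1}`. -/
def favWord (m : ℕ) : List ℕ := (List.range m).flatMap (fun b => (List.range (b+1)).reverse)

/-- `x^{α_i} = x_i / x_{i+1}` (0-indexed `i`). -/
def xalpha (i : ℕ) : K F r := XX F r (i : Fin (r+1)) / XX F r ((i+1 : ℕ) : Fin (r+1))

/-- The sublattice `Λ₀` of exponent vectors whose coordinates are all congruent mod `n`. -/
def Lam0 (n : ℕ) : Set (Fin (r+1) → ℤ) := {lam | ∀ i j, (n : ℤ) ∣ lam i - lam j}

/-- The subfield `K₀` of `K` generated by the monomials `x^λ` with `λ ∈ Λ₀`. -/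
def K0 (n : ℕ) : Subfield (K F r) :=
  Subfield.closure {x | ∃ lam ∈ Lam0 r n, x = mon F r lam}

variable (n : ℕ) (v : F) (g : ℤ → F)

/-- Data of the metaplectic (Chinta–Gunnells) action of `W = S_{r+1}` on `K`,
together with the ordinary permutation action, and their defining properties. -/
structure Setup : Type where
  /-- the Chinta–Gunnells action -/
  act : Equiv.Perm (Fin (r+1)) → K F r → K F r
  /-- the ordinary permutation action on `K` -/
  perm : Equiv.Perm (Fin (r+1)) → K F r ≃+* K F r
  perm_X : ∀ w i, perm w (XX F r i) = XX F r (w i)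
  perm_const : ∀ w c, perm w (CC F r c) = CC F r c
  perm_one : ∀ f, perm 1 f = f
  perm_mul : ∀ u w f, perm (u * w) f = perm u (perm w f)
  act_one : ∀ f, act 1 f = f
  act_mul : ∀ u w f, act (u * w) f = act u (act w f)
  act_add : ∀ w f h, act w (f + h) = act w f + act w h
  act_const_mul : ∀ w c f, act w (CC F r c * f) = CC F r c * act w f
  act_simple : ∀ i : ℕ, i < r → ∀ lam : Fin (r+1) → ℤ,
    act (sref r i) (mon F r lam) =
      mon F r (fun j => lam (sref r i j)) / (1 - CC F r v * xalpha F r i ^ (n : ℕ)) *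
        (xalpha F r i ^ (-((lam (((i+1 : ℕ) : Fin (r+1))) - lam ((i : Fin (r+1)))) % (n : ℤ)))
            * (1 - CC F r v)
          - CC F r v * CC F r (g (1 + lam (((i+1 : ℕ) : Fin (r+1))) - lam ((i : Fin (r+1)))))
            * xalpha F r i ^ (1 - (n : ℤ)) * (1 - xalpha F r i ^ (n : ℕ)))
  act_K0 : ∀ i : ℕ, i < r → ∀ h f : K F r, h ∈ K0 F r n →
    act (sref r i) (h * f) = perm (sref r i) h * act (sref r i) f

variable {F r n v g}

/-- The metaplectic Demazure operator `D_i`. -/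
def Dem (S : Setup F r n v g) (i : ℕ) (f : K F r) : K F r :=
  (f - xalpha F r i ^ (n : ℕ) * S.act (sref r i) f) / (1 - xalpha F r i ^ (n : ℕ))

/-- The metaplectic Demazure–Lusztig operator `T_i`. -/
def DL (S : Setup F r n v g) (i : ℕ) (f : K F r) : K F r :=
  (1 - CC F r v * xalpha F r i ^ (n : ℕ)) * Dem S i f - f

/-- `D_{i_1} ⋯ D_{i_l}` for a word `[i_1, …, i_l]`. -/
def DWord (S : Setup F r n v g) : List ℕ → K F r → K F r
  | [] => fun f => f
  | i :: l => fun f => Dem S i (DWord S l f)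

/-- `T_{i_1} ⋯ T_{i_l}` for a word `[i_1, …, i_l]`. -/
def TWord (S : Setup F r n v g) : List ℕ → K F r → K F r
  | [] => fun f => f
  | i :: l => fun f => DL S i (TWord S l f)

/-- `D_u` for `u ∈ W`, via a chosen reduced word for `u` (by the braid relations
this does not depend on the choice). -/
def Dperm (S : Setup F r n v g) (u : Equiv.Perm (Fin (r+1))) : K F r → K F r :=
  if h : ∃ l : List ℕ, (∀ i ∈ l, i < r) ∧ l.length = plen r u ∧ wordProd r l = u
  then DWord S h.choose else id

/-- `T_u` for `u ∈ W`, via a chosen reduced word for `u`. -/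
def Tperm (S : Setup F r n v g) (u : Equiv.Perm (Fin (r+1))) : K F r → K F r :=
  if h : ∃ l : List ℕ, (∀ i ∈ l, i < r) ∧ l.length = plen r u ∧ wordProd r l = u
  then TWord S h.choose else id

variable (F r n v g)

/-- `a : ℕ → ℕ → ℤ` encodes a Gelfand–Tsetlin pattern of rank `m`
(entries `a i j`, `0 ≤ i ≤ j ≤ m`, zero outside this triangle). -/
def IsGT (m : ℕ) (a : ℕ → ℕ → ℤ) : Prop :=
  (∀ i j, (j < i ∨ m < j) → a i j = 0) ∧
  (∀ i j, i ≤ j → j ≤ m → 0 ≤ a i j) ∧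
  (∀ i j, 1 ≤ i → i ≤ j → j ≤ m → a i j ≤ a (i-1) (j-1) ∧ a (i-1) j ≤ a i j)

/-- `d_i`, the sum of the `i`-th row of a pattern. -/
def rowSum (m : ℕ) (a : ℕ → ℕ → ℤ) (i : ℕ) : ℤ := ∑ j ∈ Finset.Icc i m, a i j

/-- The `p`-th coordinate (0-indexed) of the weight `wt(T) = (d_m, d_{m-1}-d_m, …, d_0-d_1)`. -/
def wtN (m : ℕ) (a : ℕ → ℕ → ℤ) (p : ℕ) : ℤ := rowSum m a (m - p) - rowSum m a (m - p + 1)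

/-- The Γ-array of a pattern: `Γ_{i,j} = Σ_{k=j}^{m} (a_{i,k} - a_{i-1,k})`. -/
def GammaArr (m : ℕ) (a : ℕ → ℕ → ℤ) (i j : ℕ) : ℤ :=
  ∑ k ∈ Finset.Icc j m, (a i k - a (i-1) k)

/-- `h♭(a) = 1 - v` if `n ∣ a`, else `0`. -/
def hflat (a : ℤ) : F := if (n : ℤ) ∣ a then 1 - v else 0

/-- `g♭(a) = v · g_a`. -/
def gflat (a : ℤ) : F := v * g a

/-- The factor `g_{ij}(T)` of the degree-`n` Gelfand–Tsetlin coefficient. -/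
def gcoefP (m : ℕ) (a : ℕ → ℕ → ℤ) (i j : ℕ) : F :=
  if GammaArr m a i (j+1) = GammaArr m a i j ∧
      GammaArr m a i j < GammaArr m a i (j+1) + a (i-1) (j-1) - a (i-1) j then 1
  else if GammaArr m a i (j+1) < GammaArr m a i j ∧
      GammaArr m a i j < GammaArr m a i (j+1) + a (i-1) (j-1) - a (i-1) j then
    hflat F n v (GammaArr m a i j)
  else if GammaArr m a i (j+1) < GammaArr m a i j ∧
      GammaArr m a i j = GammaArr m a i (j+1) + a (i-1) (j-1) - a (i-1) j then
    gflat F v g (GammaArr m a i j)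
  else 0

/-- The degree-`n` Gelfand–Tsetlin coefficient `G^{(n)}(T)`. -/
def Gcoef (m : ℕ) (a : ℕ → ℕ → ℤ) : F :=
  ∏ i ∈ Finset.Icc 1 m, ∏ j ∈ Finset.Icc i m, gcoefP F n v g m a i j

/-- `Γ = (Γ_1, …, Γ_m)` (1-indexed, zero outside) is `ν`-admissible. -/
def IsAdm (m : ℕ) (ν Γ : ℕ → ℤ) : Prop :=
  (∀ j, j = 0 ∨ m < j → Γ j = 0) ∧
  ∀ j, 1 ≤ j → j ≤ m → Γ (j+1) ≤ Γ j ∧ Γ j ≤ Γ (j+1) + ν j - ν (j+1) + 1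

/-- `Γ` is `(ν,k)`-admissible. -/
def IsAdmK (m k : ℕ) (ν Γ : ℕ → ℤ) : Prop := IsAdm m ν Γ ∧ ∀ j, k + 1 < j → Γ j = 0

/-- The `p`-th coordinate (0-indexed) of
`wt^{(ν)}(Γ) = (ν_{m+1}+Γ_m, ν_m+Γ_{m-1}-Γ_m, …, ν_1-Γ_1)`. -/
def wtGam (m : ℕ) (ν Γ : ℕ → ℤ) (p : ℕ) : ℤ := ν (m+1-p) + Γ (m-p) - Γ (m-p+1)

/-- The factor `c_j` of `G_1^{(ν)}(Γ)`. -/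
def gamCoef (ν Γ : ℕ → ℤ) (j : ℕ) : F :=
  if Γ (j+1) = Γ j ∧ Γ j < Γ (j+1) + ν j - ν (j+1) + 1 then 1
  else if Γ (j+1) < Γ j ∧ Γ j < Γ (j+1) + ν j - ν (j+1) + 1 then hflat F n v (Γ j)
  else if Γ (j+1) < Γ j ∧ Γ j = Γ (j+1) + ν j - ν (j+1) + 1 then gflat F v g (Γ j)
  else 0

/-- `G_1^{(ν)}(Γ)`. -/
def G1 (m : ℕ) (ν Γ : ℕ → ℤ) : F := ∏ j ∈ Finset.Icc 1 m, gamCoef F n v g ν Γ j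

/-- The top row `λ + ρ` of a pattern, as a function `ℕ → ℤ` (0-indexed columns). -/
def topRowOf (lam : Fin (r+1) → ℤ) : ℕ → ℤ :=
  fun j => if h : j ≤ r then lam ⟨j, by omega⟩ + ((r : ℤ) - (j : ℤ)) else 0

/-- The weight `λ` reread as a 1-indexed function `ℕ → ℤ` (`ν_j = λ_j`). -/
def nuOf (lam : Fin (r+1) → ℤ) : ℕ → ℤ :=
  fun j => if h : 1 ≤ j ∧ j ≤ r + 1 then lam ⟨j - 1, by omega⟩ else 0

/-- Dominance: `λ_1 ≥ λ_2 ≥ … `. -/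
def Dominant (m : ℕ) (lam : Fin m → ℤ) : Prop := ∀ i j : Fin m, i ≤ j → lam j ≤ lam i

/-- Position of `Γ_{i,j}` in the reading `b_1, b_2, …` of the Γ-array
(rows bottom to top, each row left to right). -/
def bpos (m i j : ℕ) : ℕ := (m - i) * (m - i + 1) / 2 + (j - i + 1)


/-- `δ(A,B) = h♭(A)` if `A < B`, `h♭(A) - 1` if `A = B`, `0` if `A > B`. -/
def deltaHG (A B : ℤ) : F :=
  if A < B then hflat F n v A else if A = B then hflat F n v A - 1 else 0


/-!
Deleting the top row `λ + ρ` of a Gelfand–Tsetlin pattern `T` identifies the patterns with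
`Γ_{1,j} = 0` for `j > k + 1` with pairs `(μ, T')`: `μ` is the second row, which the condition on
`Γ_{1,·}` pins to `λ + ρ` beyond column `k + 1`, and `T'` is the remaining pattern of rank `r - 1`.
The coefficient factors as `G(T) = G(T*_μ) G(T')`: the factors of the first Γ-row only see the
top two rows, which `T` and `T*_μ` share; the lower factors of `T*_μ` are all `1` when `μ` is
strictly decreasing, and otherwise `μ` has a repeated entry, which forces `G(T') = 0`. Finally
`wt T` agrees with `wt T'` in the first `r` coordinates and has last coordinate `d(λ+ρ) - d(μ)`,
which accounts for the power of `x_{r+1}`.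
-/

open Finset

theorem prod_Icc_add_one_add_one {M : Type*} [CommMonoid M] (f : ℕ → M) (a b : ℕ) :
    ∏ x ∈ Icc (a + 1) (b + 1), f x = ∏ x ∈ Icc a b, f (x + 1) := by
  rw [← map_add_right_Icc, prod_map]
  rfl

theorem sum_Icc_add_one_add_one {M : Type*} [AddCommMonoid M] (f : ℕ → M) (a b : ℕ) :
    ∑ x ∈ Icc (a + 1) (b + 1), f x = ∑ x ∈ Icc a b, f (x + 1) := by
  rw [← map_add_right_Icc, sum_map]
  rfl

theorem forall_sum_Icc_eq_zero_iff {G : Type*} [AddCommGroup G] (f : ℕ → G) (N M : ℕ) :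
    (∀ j, N < j → ∑ k ∈ Icc j M, f k = 0) ↔ ∀ j, N < j → j ≤ M → f j = 0 := by
  refine ⟨fun h j hN hM => ?_, fun h j hN => sum_eq_zero fun k hk => ?_⟩
  · have hsplit := add_sum_Ioc_eq_sum_Icc (f := f) hM
    rw [← Icc_add_one_left_eq_Ioc, h (j + 1) (by omega), h j hN, add_zero] at hsplit
    exact hsplit
  · rw [mem_Icc] at hk
    exact h k (by omega) hk.2

theorem finite_setOf_eventually_zero {α : Type*} [Zero α] (N : ℕ) (t : ℕ → Set α)
    (ht : ∀ j ≤ N, (t j).Finite) :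
    {f : ℕ → α | (∀ j, N < j → f j = 0) ∧ ∀ j ≤ N, f j ∈ t j}.Finite := by
  refine Set.Finite.of_injOn (f := fun f (j : Fin (N + 1)) => f j)
    (t := Set.univ.pi fun j : Fin (N + 1) => t j) (fun f hf j _ => hf.2 j j.is_le)
    (fun f hf f' hf' hff' => funext fun j => ?_) (Set.Finite.pi fun j => ht j j.is_le)
  by_cases hj : j ≤ N
  · exact congrFun hff' ⟨j, by omega⟩
  · rw [hf.1 j (by omega), hf'.1 j (by omega)]

theorem finite_setOf_interlacing (M : ℕ) (τ : ℕ → ℤ) :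
    {μ : ℕ → ℤ | (∀ j, (j = 0 ∨ M < j) → μ j = 0) ∧
      ∀ j, 1 ≤ j → j ≤ M → τ j ≤ μ j ∧ μ j ≤ τ (j - 1)}.Finite := by
  refine (finite_setOf_eventually_zero M (fun j => Set.Icc (-|τ j|) |τ (j - 1)|)
    fun j _ => Set.finite_Icc _ _).subset fun μ ⟨hzero, hle⟩ => ⟨fun j hj => hzero j (.inr hj),
      fun j hj => ?_⟩
  rcases Nat.eq_zero_or_pos j with rfl | hj0
  · simp [hzero 0 (.inl rfl)]
  · have := hle j hj0 hj
    exact ⟨by linarith [neg_abs_le (τ j)], by linarith [le_abs_self (τ (j - 1))]⟩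

theorem mul_finsum_eq_finsum_mul_mul_finsum_of_equiv {R α β : Type*} {γ : β → Type*}
    [CommSemiring R] (e : α ≃ Σ b, γ b) (hβ : Finite β) (hγ : ∀ b, Finite (γ b))
    {c d : R} {f : α → R} {c' : β → R} {f' : ∀ b, γ b → R}
    (h : ∀ a, c * f a = c' (e a).1 * (d * f' (e a).1 (e a).2)) :
    c * ∑ᶠ a, f a = ∑ᶠ b, c' b * (d * ∑ᶠ x, f' b x) := by
  have := Fintype.ofFinite β
  have := fun b => Fintype.ofFinite (γ b)
  have := Fintype.ofEquiv _ e.symm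
  simp only [finsum_eq_sum_of_fintype, mul_sum]
  rw [sum_sigma', univ_sigma_univ]
  exact Fintype.sum_equiv e _ _ h

def dropTop (a : ℕ → ℕ → ℤ) : ℕ → ℕ → ℤ := fun i j => a (i + 1) (j + 1)

def consTop (τ : ℕ → ℤ) (b : ℕ → ℕ → ℤ) : ℕ → ℕ → ℤ :=
  fun i j => if i = 0 then τ j else if j = 0 then 0 else b (i - 1) (j - 1)

/-- The pattern `T*_μ` of the paper. -/
def starPat (m : ℕ) (τ μ : ℕ → ℤ) : ℕ → ℕ → ℤ :=
  fun i j => if i = 0 then τ j else if 1 ≤ i ∧ i ≤ j ∧ j ≤ m then μ j else 0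

namespace IsGT

variable {m : ℕ} {a : ℕ → ℕ → ℤ}

theorem le_top (ha : IsGT m a) : ∀ i j, i ≤ j → j ≤ m → a i j ≤ a 0 (j - i)
  | 0, _, _, _ => le_rfl
  | i + 1, j, hij, hj => by
    have hstep := (ha.2.2 (i + 1) j (by omega) hij hj).1
    have hrec := ha.le_top i (j - 1) (by omega) (by omega)
    rw [Nat.add_sub_cancel] at hstep
    rw [Nat.sub_sub, Nat.add_comm 1] at hrec
    exact hstep.trans hrec

theorem dropTop (ha : IsGT (m + 1) a) : IsGT m (dropTop a) := by
  refine ⟨fun i j hij => ha.1 _ _ (by omega), fun i j hij hj => ha.2.1 _ _ (by omega) (by omega),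
    fun i j hi hij hj => ?_⟩
  have := ha.2.2 (i + 1) (j + 1) (by omega) (by omega) (by omega)
  simpa [MetaPaper.dropTop, Nat.sub_add_cancel hi, Nat.sub_add_cancel (hi.trans hij)] using this

theorem row_one_interlacing (ha : IsGT (m + 1) a) (j : ℕ) (hj : 1 ≤ j) (hjm : j ≤ m + 1) :
    a 0 j ≤ a 1 j ∧ a 1 j ≤ a 0 (j - 1) :=
  (ha.2.2 1 j le_rfl hj hjm).symm

theorem consTop {τ : ℕ → ℤ} {b : ℕ → ℕ → ℤ} (hb : IsGT m b)
    (hτ0 : ∀ j ≤ m + 1, 0 ≤ τ j) (hτ : ∀ j, m + 1 < j → τ j = 0)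
    (hint : ∀ j, 1 ≤ j → j ≤ m + 1 → τ j ≤ b 0 (j - 1) ∧ b 0 (j - 1) ≤ τ (j - 1)) :
    IsGT (m + 1) (MetaPaper.consTop τ b) := by
  refine ⟨fun i j hij => ?_, fun i j hij hj => ?_, fun i j hi hij hj => ?_⟩
  · rcases Nat.eq_zero_or_pos i with rfl | hi
    · simpa [MetaPaper.consTop] using hτ j (by omega)
    · simp only [MetaPaper.consTop, hi.ne', if_false]
      split_ifs
      · rfl
      · exact hb.1 _ _ (by omega)
  · rcases Nat.eq_zero_or_pos i with rfl | hi
    · simpa [MetaPaper.consTop] using hτ0 j hj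
    · simpa [MetaPaper.consTop, hi.ne', (hi.trans_le hij).ne'] using
        hb.2.1 (i - 1) (j - 1) (by omega) (by omega)
  · obtain rfl | hi2 := hi.eq_or_lt
    · simpa [MetaPaper.consTop, Nat.one_le_iff_ne_zero.mp hij] using (hint j hij hj).symm
    · have := hb.2.2 (i - 1) (j - 1) (by omega) (by omega) (by omega)
      simp only [MetaPaper.consTop]
      rw [if_neg (by omega), if_neg (by omega), if_neg (by omega), if_neg (by omega),
        if_neg (by omega), if_neg (by omega), Nat.sub_sub, Nat.sub_sub]
      exact this

end IsGT

theorem finite_setOf_isGT (m : ℕ) (τ : ℕ → ℤ) :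
    {a : ℕ → ℕ → ℤ | IsGT m a ∧ ∀ j, j ≤ m → a 0 j = τ j}.Finite := by
  let row (i : ℕ) : Set (ℕ → ℤ) :=
    {f | (∀ j, m < j → f j = 0) ∧ ∀ j ≤ m, f j ∈ Set.Icc 0 |τ (j - i)|}
  refine (finite_setOf_eventually_zero m row fun i _ =>
    finite_setOf_eventually_zero m _ fun j _ => Set.finite_Icc _ _).subset ?_
  rintro a ⟨ha, htop⟩
  refine ⟨fun i hi => funext fun j => ha.1 i j (by omega), fun i _ =>
    ⟨fun j hj => ha.1 i j (.inr hj), fun j hj => ?_⟩⟩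
  by_cases hij : i ≤ j
  · have := ha.le_top i j hij hj
    rw [htop _ (by omega)] at this
    exact ⟨ha.2.1 i j hij hj, this.trans (le_abs_self _)⟩
  · simp [ha.1 i j (.inl (by omega))]

@[simp]
theorem dropTop_consTop (τ : ℕ → ℤ) (b : ℕ → ℕ → ℤ) : dropTop (consTop τ b) = b := by
  funext i j
  simp [dropTop, consTop]

theorem consTop_dropTop {m : ℕ} {a : ℕ → ℕ → ℤ} (ha : IsGT m a) :
    consTop (a 0) (dropTop a) = a := by
  funext i j
  rcases Nat.eq_zero_or_pos i with rfl | hi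
  · simp [consTop]
  rcases Nat.eq_zero_or_pos j with rfl | hj
  · simp [consTop, ha.1 i 0 (.inl hi), hi.ne']
  · simp [consTop, dropTop, hi.ne', hj.ne', Nat.sub_add_cancel hi, Nat.sub_add_cancel hj]

theorem consTop_one_eq {m : ℕ} {τ μ : ℕ → ℤ} {b : ℕ → ℕ → ℤ}
    (hμ : ∀ j, (j = 0 ∨ m + 1 < j) → μ j = 0) (hb : IsGT m b)
    (hbtop : ∀ j, j ≤ m → b 0 j = μ (j + 1)) : consTop τ b 1 = μ := by
  funext j
  rcases Nat.eq_zero_or_pos j with rfl | hj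
  · simp [consTop, hμ 0 (.inl rfl)]
  by_cases hjm : j ≤ m + 1
  · simp [consTop, hj.ne', hbtop (j - 1) (by omega), Nat.sub_add_cancel hj]
  · simp [consTop, hj.ne', hb.1 0 (j - 1) (.inr (by omega)), hμ j (.inr (by omega))]

theorem GammaArr_tail_eq_zero_iff (M k i : ℕ) (a : ℕ → ℕ → ℤ) :
    (∀ j, k + 1 < j → GammaArr M a i j = 0) ↔ ∀ j, k + 1 < j → j ≤ M → a i j = a (i - 1) j := by
  simp only [GammaArr, forall_sum_Icc_eq_zero_iff, sub_eq_zero]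

theorem GammaArr_dropTop (m : ℕ) (a : ℕ → ℕ → ℤ) {i : ℕ} (hi : 1 ≤ i) (j : ℕ) :
    GammaArr m (dropTop a) i j = GammaArr (m + 1) a (i + 1) (j + 1) := by
  simp [GammaArr, dropTop, sum_Icc_add_one_add_one, Nat.sub_add_cancel hi]

section Coefficients

variable {F n v g}

theorem gcoefP_dropTop (m : ℕ) (a : ℕ → ℕ → ℤ) {i j : ℕ} (hi : 1 ≤ i) (hij : i ≤ j) :
    gcoefP F n v g m (dropTop a) i j = gcoefP F n v g (m + 1) a (i + 1) (j + 1) := by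
  simp only [gcoefP, GammaArr_dropTop m a hi, dropTop, Nat.sub_add_cancel hi,
    Nat.sub_add_cancel (hi.trans hij), Nat.add_sub_cancel]

theorem Gcoef_succ (m : ℕ) (a : ℕ → ℕ → ℤ) :
    Gcoef F n v g (m + 1) a =
      (∏ j ∈ Icc 1 (m + 1), gcoefP F n v g (m + 1) a 1 j) * Gcoef F n v g m (dropTop a) := by
  rw [Gcoef, ← mul_prod_Ioc_eq_prod_Icc (by omega), ← Icc_add_one_left_eq_Ioc,
    prod_Icc_add_one_add_one (a := 1), Gcoef]
  congr 1
  refine prod_congr rfl fun i hi => ?_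
  rw [prod_Icc_add_one_add_one]
  exact prod_congr rfl fun j hj =>
    (gcoefP_dropTop m a (mem_Icc.mp hi).1 (mem_Icc.mp hj).1).symm

theorem gcoefP_one_congr (M : ℕ) {a a' : ℕ → ℕ → ℤ} (h0 : a 0 = a' 0) (h1 : a 1 = a' 1) (j : ℕ) :
    gcoefP F n v g M a 1 j = gcoefP F n v g M a' 1 j := by
  simp only [gcoefP, GammaArr, Nat.sub_self, h0, h1]

theorem Gcoef_eq_zero_of_top_eq {m : ℕ} {b : ℕ → ℕ → ℤ} (hb : IsGT m b) {j : ℕ} (hj : 1 ≤ j)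
    (hjm : j ≤ m) (heq : b 0 (j - 1) = b 0 j) : Gcoef F n v g m b = 0 := by
  refine prod_eq_zero (mem_Icc.mpr ⟨le_rfl, hj.trans hjm⟩)
    (prod_eq_zero (mem_Icc.mpr ⟨hj, hjm⟩) ?_)
  -- the entry `b 1 j` is squeezed between the equal entries `b 0 j` and `b 0 (j-1)`
  have hsq := hb.2.2 1 j le_rfl hj hjm
  have hΓ : GammaArr m b 1 j = GammaArr m b 1 (j + 1) := by
    rw [GammaArr, ← add_sum_Ioc_eq_sum_Icc hjm, ← Icc_add_one_left_eq_Ioc, ← GammaArr]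
    simp only [Nat.sub_self] at hsq ⊢
    omega
  simp only [gcoefP, Nat.sub_self, hΓ, heq]
  split_ifs <;> first | rfl | omega

theorem Gcoef_dropTop_starPat (m : ℕ) (τ : ℕ → ℤ) {μ : ℕ → ℤ}
    (hμ : ∀ j, 1 ≤ j → j ≤ m → μ (j + 1) < μ j) :
    Gcoef F n v g m (dropTop (starPat (m + 1) τ μ)) = 1 := by
  refine prod_eq_one fun i hi => prod_eq_one fun j hj => ?_
  obtain ⟨hi1, him⟩ := mem_Icc.mp hi
  obtain ⟨hij, hjm⟩ := mem_Icc.mp hj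
  have hrow : ∀ i' j', i' ≤ j' → j' ≤ m → dropTop (starPat (m + 1) τ μ) i' j' = μ (j' + 1) :=
    fun i' j' h h' => if_pos ⟨by omega, by omega, by omega⟩
  have hΓ : ∀ j', i ≤ j' → GammaArr m (dropTop (starPat (m + 1) τ μ)) i j' = 0 := fun j' hj' =>
    sum_eq_zero fun l hl => by
      rw [hrow i l (by grind) (mem_Icc.mp hl).2, hrow (i - 1) l (by grind) (mem_Icc.mp hl).2,
        sub_self]
  have hlt := hμ j (by omega) hjm
  rw [gcoefP, hΓ j hij, hΓ (j + 1) (by omega), hrow (i - 1) (j - 1) (by omega) (by omega),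
    hrow (i - 1) j (by omega) hjm, Nat.sub_add_cancel (hi1.trans hij), if_pos ⟨rfl, by omega⟩]

theorem Gcoef_eq_Gcoef_starPat_mul {m : ℕ} {a : ℕ → ℕ → ℤ} (ha : IsGT (m + 1) a) :
    Gcoef F n v g (m + 1) a =
      Gcoef F n v g (m + 1) (starPat (m + 1) (a 0) (a 1)) * Gcoef F n v g m (dropTop a) := by
  have hrow1 : ∏ j ∈ Icc 1 (m + 1), gcoefP F n v g (m + 1) a 1 j =
      ∏ j ∈ Icc 1 (m + 1), gcoefP F n v g (m + 1) (starPat (m + 1) (a 0) (a 1)) 1 j := by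
    refine prod_congr rfl fun j _ => gcoefP_one_congr _ (funext fun j => (if_pos rfl).symm)
      (funext fun j => ?_) j
    by_cases hj : 1 ≤ j ∧ j ≤ m + 1
    · simp [starPat, hj.1, hj.2]
    · simp only [starPat, one_ne_zero, if_false, le_refl, true_and, if_neg hj]
      exact ha.1 1 j (by omega)
  rw [Gcoef_succ, Gcoef_succ, hrow1]
  by_cases hstrict : ∀ j, 1 ≤ j → j ≤ m → a 1 (j + 1) < a 1 j
  · rw [Gcoef_dropTop_starPat m _ hstrict, mul_one]
  · -- row one of an interlacing pattern is weakly decreasing, so it has a repeated entry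
    push Not at hstrict
    obtain ⟨j, hj, hjm, hle⟩ := hstrict
    have h1 := ha.row_one_interlacing j hj (by omega)
    have h2 := ha.row_one_interlacing (j + 1) (by omega) (by omega)
    rw [Nat.add_sub_cancel] at h2
    rw [Gcoef_eq_zero_of_top_eq ha.dropTop hj hjm (by simp only [dropTop]; grind), mul_zero,
      mul_zero]

end Coefficients

theorem rowSum_dropTop (m : ℕ) (a : ℕ → ℕ → ℤ) (i : ℕ) :
    rowSum m (dropTop a) i = rowSum (m + 1) a (i + 1) := by
  simp only [rowSum, dropTop, sum_Icc_add_one_add_one]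

theorem wtN_dropTop (m : ℕ) (a : ℕ → ℕ → ℤ) {p : ℕ} (hp : p ≤ m) :
    wtN m (dropTop a) p = wtN (m + 1) a p := by
  simp only [wtN, rowSum_dropTop, Nat.sub_add_comm hp]

section Monomials

variable {F} {r}

theorem XX_ne_zero (i : Fin (r + 1)) : XX F r i ≠ 0 :=
  (map_ne_zero_iff _ (IsFractionRing.injective _ _)).mpr (MvPolynomial.X_ne_zero i)

theorem mon_add (f f' : Fin (r + 1) → ℤ) : mon F r (f + f') = mon F r f * mon F r f' := by
  simp only [mon, Pi.add_apply, ← prod_mul_distrib]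
  exact prod_congr rfl fun i _ => zpow_add₀ (XX_ne_zero i) _ _

theorem mon_eq_XX_last_zpow_mul {m : ℕ} (w : Fin (m + 2) → ℤ) :
    mon F (m + 1) w = XX F (m + 1) (Fin.last (m + 1)) ^ w (Fin.last (m + 1)) *
      mon F (m + 1) (fun j => if j.val < m + 1 then w j else 0) := by
  simp only [mon, Fin.prod_univ_castSucc, Fin.val_castSucc, Fin.is_lt, if_true, Fin.val_last,
    lt_irrefl, if_false, zpow_zero, mul_one]
  ring

theorem CC_mul (c c' : F) : CC F r (c * c') = CC F r c * CC F r c' := by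
  simp only [CC, map_mul]

end Monomials

/-- Removing the top row `τ` of a pattern, recording the row below it separately. -/
def branchEquiv (m k : ℕ) (τ : ℕ → ℤ) (hτ0 : ∀ j ≤ m + 1, 0 ≤ τ j)
    (hτ : ∀ j, m + 1 < j → τ j = 0) :
    {a : ℕ → ℕ → ℤ // IsGT (m + 1) a ∧ (∀ j, a 0 j = τ j) ∧
        ∀ j, k + 1 < j → GammaArr (m + 1) a 1 j = 0} ≃
      Σ μ : {μ : ℕ → ℤ // (∀ j, (j = 0 ∨ m + 1 < j) → μ j = 0) ∧
          (∀ j, 1 ≤ j → j ≤ m + 1 → τ j ≤ μ j ∧ μ j ≤ τ (j - 1)) ∧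
          (∀ j, k + 1 < j → j ≤ m + 1 → μ j = τ j)},
        {b : ℕ → ℕ → ℤ // IsGT m b ∧ ∀ j, j ≤ m → b 0 j = μ.1 (j + 1)} where
  toFun T :=
    have htail := (GammaArr_tail_eq_zero_iff _ _ _ _).mp T.2.2.2
    ⟨⟨T.1 1, fun j hj => T.2.1.1 1 j (by omega),
        fun j hj hjm => by simpa [T.2.2.1] using T.2.1.row_one_interlacing j hj hjm,
        fun j hj hjm => by simpa [T.2.2.1] using htail j hj hjm⟩,
      ⟨dropTop T.1, T.2.1.dropTop, fun _ _ => rfl⟩⟩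
  invFun x :=
    have hrow1 := consTop_one_eq (τ := τ) x.1.2.1 x.2.2.1 x.2.2.2
    ⟨consTop τ x.2.1,
      x.2.2.1.consTop hτ0 hτ fun j hj hjm => by
        simpa [x.2.2.2 (j - 1) (by omega), Nat.sub_add_cancel hj] using x.1.2.2.1 j hj hjm,
      fun _ => rfl,
      (GammaArr_tail_eq_zero_iff _ _ _ _).mpr fun j hj hjm => by
        rw [hrow1]
        exact x.1.2.2.2 j hj hjm⟩
  left_inv T := Subtype.ext <| by
    conv_rhs => rw [← consTop_dropTop T.2.1]
    rw [funext T.2.2.1]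
  right_inv x := Sigma.subtype_ext (Subtype.ext (consTop_one_eq (τ := τ) x.1.2.1 x.2.2.1 x.2.2.2))
    (dropTop_consTop τ _)

section Branching

variable {F n v g}

theorem mon_mul_mon_wtN_eq_branch (m : ℕ) (a : ℕ → ℕ → ℤ) :
    mon F (m + 1) (fun j => -(((m + 1 : ℕ) : ℤ) - (j.rev.val : ℤ))) *
        mon F (m + 1) (fun p => wtN (m + 1) a p.val) =
      XX F (m + 1) (Fin.last (m + 1)) ^
          (rowSum (m + 1) a 0 - rowSum (m + 1) a 1 - ((m + 1 : ℕ) : ℤ)) *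
        (mon F (m + 1) (fun j => if j.val < m + 1 then -(j.val : ℤ) else 0) *
          mon F (m + 1) (fun j => if j.val < m + 1 then wtN m (dropTop a) j.val else 0)) := by
  rw [← mon_add, ← mon_add, mon_eq_XX_last_zpow_mul]
  congr 2
  · simp [wtN, Fin.val_rev]
    ring
  · funext j
    split_ifs with hj
    · simp [wtN_dropTop m a (by omega : j.val ≤ m), Fin.val_rev]
      omega
    · simp [show ¬j.val ≤ m by omega]

theorem term_eq_branch_term {m : ℕ} {τ : ℕ → ℤ} {a : ℕ → ℕ → ℤ} (ha : IsGT (m + 1) a)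
    (htop : ∀ j, a 0 j = τ j) :
    mon F (m + 1) (fun j => -(((m + 1 : ℕ) : ℤ) - (j.rev.val : ℤ))) *
        (CC F (m + 1) (Gcoef F n v g (m + 1) a) * mon F (m + 1) (fun p => wtN (m + 1) a p.val)) =
      CC F (m + 1) (Gcoef F n v g (m + 1) (starPat (m + 1) τ (a 1))) *
        XX F (m + 1) (Fin.last (m + 1)) ^
          ((∑ j ∈ range (m + 1 + 1), τ j) - (∑ j ∈ Icc 1 (m + 1), a 1 j) - ((m + 1 : ℕ) : ℤ)) *
        (mon F (m + 1) (fun j => if j.val < m + 1 then -(j.val : ℤ) else 0) *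
          (CC F (m + 1) (Gcoef F n v g m (dropTop a)) *
            mon F (m + 1) (fun j => if j.val < m + 1 then wtN m (dropTop a) j.val else 0))) := by
  have hw := mon_mul_mon_wtN_eq_branch (F := F) m a
  have hrow0 : rowSum (m + 1) a 0 = ∑ j ∈ range (m + 1 + 1), τ j := by
    simp [rowSum, ← Nat.range_succ_eq_Icc_zero, htop]
  rw [hrow0, show rowSum (m + 1) a 1 = ∑ j ∈ Icc 1 (m + 1), a 1 j from rfl] at hw
  rw [Gcoef_eq_Gcoef_starPat_mul ha, funext htop, CC_mul]
  linear_combination (CC F (m + 1) (Gcoef F n v g (m + 1) (starPat (m + 1) τ (a 1))) *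
    CC F (m + 1) (Gcoef F n v g m (dropTop a))) * hw

end Branching


theorem statement12_general (r n : ℕ) (hr : 1 ≤ r) (v : ℂ) (g : ℤ → ℂ)
    (lam : Fin (r+1) → ℤ) (hdom : Dominant (r+1) lam) (heff : 0 ≤ lam (Fin.last r))
    (k : ℕ) :
    mon ℂ r (fun j => -((r : ℤ) - (j.rev.val : ℤ))) *
      (∑ᶠ T : {a : ℕ → ℕ → ℤ // IsGT r a ∧ (∀ j, a 0 j = topRowOf r lam j) ∧
            ∀ j, k + 1 < j → GammaArr r a 1 j = 0},
        CC ℂ r (Gcoef ℂ n v g r T.1) * mon ℂ r (fun p => wtN r T.1 p.val))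
    = ∑ᶠ μ : {μ : ℕ → ℤ // (∀ j, (j = 0 ∨ r < j) → μ j = 0) ∧
          (∀ j, 1 ≤ j → j ≤ r → topRowOf r lam j ≤ μ j ∧ μ j ≤ topRowOf r lam (j-1)) ∧
          (∀ j, k + 1 < j → j ≤ r → μ j = topRowOf r lam j)},
        CC ℂ r (Gcoef ℂ n v g r (fun i j =>
            if i = 0 then topRowOf r lam j
            else if 1 ≤ i ∧ i ≤ j ∧ j ≤ r then μ.1 j else 0)) *
          XX ℂ r (Fin.last r) ^
            ((∑ j ∈ Finset.range (r+1), topRowOf r lam j)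
              - (∑ j ∈ Finset.Icc 1 r, μ.1 j) - (r : ℤ)) *
          (mon ℂ r (fun j => if j.val < r then -(j.val : ℤ) else 0) *
            ∑ᶠ T' : {a : ℕ → ℕ → ℤ // IsGT (r-1) a ∧ ∀ j, j ≤ r - 1 → a 0 j = μ.1 (j+1)},
              CC ℂ r (Gcoef ℂ n v g (r-1) T'.1) *
                mon ℂ r (fun j => if j.val < r then wtN (r-1) T'.1 j.val else 0)) := by
  obtain ⟨m, rfl⟩ : ∃ m, r = m + 1 := ⟨r - 1, by omega⟩
  simp only [Nat.add_sub_cancel]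
  have hτ0 : ∀ j ≤ m + 1, 0 ≤ topRowOf (m + 1) lam j := fun j hj => by
    have := hdom ⟨j, by omega⟩ (Fin.last _) (Fin.le_last _)
    simp only [topRowOf, dif_pos hj]
    omega
  have hτ : ∀ j, m + 1 < j → topRowOf (m + 1) lam j = 0 := fun j hj => dif_neg (by omega)
  refine mul_finsum_eq_finsum_mul_mul_finsum_of_equiv (branchEquiv m k _ hτ0 hτ)
    ((finite_setOf_interlacing _ _).subset fun μ hμ => ⟨hμ.1, hμ.2.1⟩).to_subtype
    (fun μ => (finite_setOf_isGT _ _).to_subtype) fun T => ?_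
  exact term_eq_branch_term T.2.1 T.2.2.1

/-- branching of the Demazure-crystal sum:
`x^{-w₀ρ} Σ_T G^{(n)}(T) x^{wt T}` (patterns with `Γ_{1,j} = 0` for `j > k+1`) equals
`Σ_μ G^{(n)}(T*_μ) x_{r+1}^{d(λ+ρ)-d(μ)-r} (y^{-w₀^{(r-1)}ρ_{r-1}} Σ_{T'} G^{(n)}(T') y^{wt T'})`. -/
theorem statement12 (r n : ℕ) (hr : 1 ≤ r) (hn : 1 ≤ n) (v : ℂ) (g : ℤ → ℂ)
    (hv : v ≠ 0)
    (hgper : ∀ i j : ℤ, i % (n : ℤ) = j % (n : ℤ) → g i = g j)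
    (hg0 : g 0 = -1)
    (hginv : ∀ i : ℤ, 1 ≤ i → i ≤ (n : ℤ) - 1 → g i * g ((n : ℤ) - i) = v⁻¹)
    (lam : Fin (r+1) → ℤ) (hdom : Dominant (r+1) lam) (heff : 0 ≤ lam (Fin.last r))
    (k : ℕ) (hk : k ≤ r - 1) :
    mon ℂ r (fun j => -((r : ℤ) - (j.rev.val : ℤ))) *
      (∑ᶠ T : {a : ℕ → ℕ → ℤ // IsGT r a ∧ (∀ j, a 0 j = topRowOf r lam j) ∧
            ∀ j, k + 1 < j → GammaArr r a 1 j = 0},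
        CC ℂ r (Gcoef ℂ n v g r T.1) * mon ℂ r (fun p => wtN r T.1 p.val))
    = ∑ᶠ μ : {μ : ℕ → ℤ // (∀ j, (j = 0 ∨ r < j) → μ j = 0) ∧
          (∀ j, 1 ≤ j → j ≤ r → topRowOf r lam j ≤ μ j ∧ μ j ≤ topRowOf r lam (j-1)) ∧
          (∀ j, k + 1 < j → j ≤ r → μ j = topRowOf r lam j)},
        CC ℂ r (Gcoef ℂ n v g r (fun i j =>
            if i = 0 then topRowOf r lam j
            else if 1 ≤ i ∧ i ≤ j ∧ j ≤ r then μ.1 j else 0)) *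
          XX ℂ r (Fin.last r) ^
            ((∑ j ∈ Finset.range (r+1), topRowOf r lam j)
              - (∑ j ∈ Finset.Icc 1 r, μ.1 j) - (r : ℤ)) *
          (mon ℂ r (fun j => if j.val < r then -(j.val : ℤ) else 0) *
            ∑ᶠ T' : {a : ℕ → ℕ → ℤ // IsGT (r-1) a ∧ ∀ j, j ≤ r - 1 → a 0 j = μ.1 (j+1)},
              CC ℂ r (Gcoef ℂ n v g (r-1) T'.1) *
                mon ℂ r (fun j => if j.val < r then wtN (r-1) T'.1 j.val else 0)) :=
  statement12_general r n hr v g lam hdom heff k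

end MetaPaper
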